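/- arXiv:0812.2660 — 3 statements merged into one kernel-verified Lean document; each statement's English description precedes it below -/
import Mathlib

section
/- Let f = Σ_{u ∈ S} c_u t^u be a Laurent polynomial in n variables over ℂ with finite support S ⊆ ℤⁿ, and let z ∈ ℂⁿ. Suppose there is a partition S = S₁ ⊔ … ⊔ S_r such that Σ_{u ∈ S_i} c_u = 0 for each i, and ⟨u − v, z⟩ = 0 for all u, v ∈ S_i and all i. Then exp(tz) lies in the zero set of f for all t ∈ ℂ, i.e., z ∈ τ₁(V(f)). -/
/-!
Along the curve `t ↦ exp(tz)` the monomial `t^u` takes the value `exp(t⟨u, z⟩)`. On a block of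
the partition `⟨u, z⟩` does not depend on `u`, so the block contributes `(Σ_{u ∈ Sᵢ} c_u)` times a
single exponential, which vanishes.
-/

open Finset

theorem Finpartition.sum_sum_parts {α M : Type*} [DecidableEq α] [AddCommMonoid M] {s : Finset α}
    (P : Finpartition s) (f : α → M) : ∑ b ∈ P.parts, ∑ x ∈ b, f x = ∑ x ∈ s, f x := by
  conv_rhs => rw [← P.biUnion_parts]
  exact (sum_biUnion P.supIndep.pairwiseDisjoint).symm

theorem Finset.sum_mul_eq_zero_of_sum_eq_zero {α R : Type*} [NonUnitalNonAssocSemiring R]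
    {s : Finset α} {c g : α → R} (hc : ∑ x ∈ s, c x = 0)
    (hg : ∀ x ∈ s, ∀ y ∈ s, g x = g y) : ∑ x ∈ s, c x * g x = 0 := by
  rcases s.eq_empty_or_nonempty with rfl | ⟨y, hy⟩
  · exact sum_empty
  · calc ∑ x ∈ s, c x * g x = ∑ x ∈ s, c x * g y := sum_congr rfl fun x hx => by rw [hg x hx y hy]
      _ = 0 := by rw [← sum_mul, hc, zero_mul]

theorem Complex.prod_exp_zpow {ι : Type*} [Fintype ι] (w : ι → ℂ) (u : ι → ℤ) :
    ∏ j, exp (w j) ^ u j = exp (∑ j, (u j : ℂ) * w j) := by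
  rw [exp_sum]
  exact prod_congr rfl fun j _ => (exp_int_mul _ _).symm

theorem Complex.prod_exp_smul_zpow {ι : Type*} [Fintype ι] (t : ℂ) (z : ι → ℂ) (u : ι → ℤ) :
    ∏ j, exp (t * z j) ^ u j = exp (t * ∑ j, (u j : ℂ) * z j) := by
  rw [prod_exp_zpow, mul_sum]
  exact congrArg exp (sum_congr rfl fun j _ => by ring)

/-- Let `f = Σ_{u ∈ S} c_u t^u` be a Laurent polynomial with finite support `S ⊆ ℤⁿ`.
If there is a partition of `S` such that the coefficients sum to zero on each block and
`⟨u − v, z⟩ = 0` for all `u, v` in a common block, then the curve `t ↦ exp(tz)` lies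
in the zero set of `f`, i.e. `z ∈ τ₁(V(f))`. -/
theorem mem_tau1_of_partition {n : ℕ} (S : Finset (Fin n → ℤ)) (c : (Fin n → ℤ) → ℂ)
    (z : Fin n → ℂ) (P : Finpartition S)
    (hsum : ∀ b ∈ P.parts, ∑ u ∈ b, c u = 0)
    (horth : ∀ b ∈ P.parts, ∀ u ∈ b, ∀ v ∈ b, ∑ j, ((u j : ℂ) - (v j : ℂ)) * z j = 0) :
    ∀ t : ℂ, ∑ u ∈ S, c u * ∏ j, Complex.exp (t * z j) ^ (u j) = 0 := by
  intro t
  rw [← P.sum_sum_parts]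
  refine sum_eq_zero fun b hb => sum_mul_eq_zero_of_sum_eq_zero (hsum b hb) fun u hu v hv => ?_
  have hpair : ∑ j, (u j : ℂ) * z j = ∑ j, (v j : ℂ) * z j := by
    rw [← sub_eq_zero, ← sum_sub_distrib, ← horth b hb u hu v hv]
    exact sum_congr rfl fun j _ => (sub_mul _ _ _).symm
  rw [Complex.prod_exp_smul_zpow, Complex.prod_exp_smul_zpow, hpair]
end

section
/- Let f = Σ_{u ∈ S} c_u t^u be a Laurent polynomial over ℂ with finite support S ⊆ ℤⁿ, and z ∈ ℂⁿ with exp(tz) ∈ V(f) for all t ∈ ℂ. Then there exists a partition S = S₁ ⊔ … ⊔ S_r with Σ_{u ∈ S_i} c_u = 0 for each i and ⟨u − v, z⟩ = 0 for all u, v in the same block. -/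
/-!
Writing `μ u = ⟨u, z⟩`, the monomial `t^u` evaluated at `exp (t z)` is `exp (μ u * t)`, so the
hypothesis says `Σ_a (Σ_{μ u = a} c u) exp (a t) = 0` identically in `t`. The exponentials
`t ↦ exp (a t)` are distinct characters of `(ℂ, +)`, hence linearly independent, so every
fibre sum vanishes, and the fibres of `μ` are the required partition.
-/

open Finset Complex

lemma cexp_mul_left_injective : Function.Injective fun a t : ℂ => cexp (a * t) := by
  intro a b h
  have deriv_at_zero (a : ℂ) : deriv (fun t : ℂ => cexp (a * t)) 0 = a := by
    simpa using ((hasDerivAt_id (0 : ℂ)).const_mul a).cexp.deriv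
  simpa only [deriv_at_zero] using congrArg (deriv · 0) h

lemma linearIndependent_cexp_mul_left : LinearIndependent ℂ fun a t : ℂ => cexp (a * t) := by
  let character (a : ℂ) : Multiplicative ℂ →* ℂ :=
    expMonoidHom.comp (AddMonoidHom.mulLeft a).toMultiplicative
  exact (linearIndependent_monoidHom (Multiplicative ℂ) ℂ).comp character
    fun a b h => cexp_mul_left_injective (congrArg DFunLike.coe h)

theorem sum_filter_eq_zero_of_forall_sum_mul_cexp_eq_zero {ι : Type*} {s : Finset ι}
    {c μ : ι → ℂ} (h : ∀ t, ∑ i ∈ s, c i * cexp (μ i * t) = 0) (a : ℂ) :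
    ∑ i ∈ s with μ i = a, c i = 0 := by
  by_cases ha : a ∈ s.image μ
  · refine linearIndependent_iff'.mp linearIndependent_cexp_mul_left _
      (fun b => ∑ i ∈ s with μ i = b, c i) ?_ a ha
    funext t
    simp only [Finset.sum_apply, Pi.smul_apply, smul_eq_mul, Pi.zero_apply, Finset.sum_mul]
    rw [← h t, ← sum_fiberwise_of_maps_to fun i hi => mem_image_of_mem μ hi]
    exact sum_congr rfl fun b _ => sum_congr rfl fun i hi => by rw [(mem_filter.mp hi).2]
  · rw [filter_false_of_mem fun i hi (hμ : μ i = a) => ha (hμ ▸ mem_image_of_mem μ hi), sum_empty]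

lemma prod_cexp_mul_zpow {ι : Type*} [Fintype ι] (z : ι → ℂ) (u : ι → ℤ) (t : ℂ) :
    ∏ j, cexp (t * z j) ^ u j = cexp ((∑ j, (u j : ℂ) * z j) * t) := by
  simp_rw [← exp_int_mul, ← exp_sum, sum_mul, mul_assoc, mul_comm t]

/-- Let `f = Σ_{u ∈ S} c_u t^u` be a Laurent polynomial with finite support `S ⊆ ℤⁿ`,
and suppose `exp(tz)` lies in the zero set of `f` for all `t ∈ ℂ`. Then there is a
partition of `S` whose blocks have coefficient sum zero and satisfy `⟨u − v, z⟩ = 0`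
for all `u, v` in a common block. -/
theorem exists_partition_of_mem_tau1 {n : ℕ} (S : Finset (Fin n → ℤ)) (c : (Fin n → ℤ) → ℂ)
    (z : Fin n → ℂ)
    (hz : ∀ t : ℂ, ∑ u ∈ S, c u * ∏ j, Complex.exp (t * z j) ^ (u j) = 0) :
    ∃ P : Finpartition S,
      (∀ b ∈ P.parts, ∑ u ∈ b, c u = 0) ∧
      (∀ b ∈ P.parts, ∀ u ∈ b, ∀ v ∈ b, ∑ j, ((u j : ℂ) - (v j : ℂ)) * z j = 0) := by
  classical
  set μ : (Fin n → ℤ) → ℂ := fun u => ∑ j, (u j : ℂ) * z j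
  have hμ (t : ℂ) : ∑ u ∈ S, c u * cexp (μ u * t) = 0 := by
    simpa only [prod_cexp_mul_zpow] using hz t
  refine ⟨Finpartition.ofSetSetoid (Setoid.ker μ) S, ?_, ?_⟩
  · intro b hb
    obtain ⟨u, -, rfl⟩ := mem_image.mp hb
    simpa only [Setoid.ker_def, eq_comm] using
      sum_filter_eq_zero_of_forall_sum_mul_cexp_eq_zero hμ (μ u)
  · intro b hb u hu v hv
    obtain ⟨w, -, rfl⟩ := mem_image.mp hb
    have hwu : μ w = μ u := (mem_filter.mp hu).2
    have hwv : μ w = μ v := (mem_filter.mp hv).2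
    calc ∑ j, ((u j : ℂ) - v j) * z j = μ u - μ v := by simp only [μ, sub_mul, sum_sub_distrib]
      _ = 0 := by rw [← hwu, ← hwv, sub_self]
end

section
/- Let ν : ℤⁿ → ℤʳ and μ : ℤⁿ → ℤˢ be surjective group homomorphisms with kernels A and B respectively, and let k be an infinite field. Then the intersection ν*(Hom(ℤʳ, kˣ)) ∩ μ*(Hom(ℤˢ, kˣ)) inside Hom(ℤⁿ, kˣ) is finite if and only if ν*(Hom(ℤʳ, ℚ)) ∩ μ*(Hom(ℤˢ, ℚ)) = {0} inside Hom(ℤⁿ, ℚ). -/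
/-!
By the homomorphism theorem, a character of `G = ℤⁿ` is pulled back along the surjection `ν`
exactly when it kills `A = ker ν`, so both intersections are `Hom(G ⧸ (A + B), -)`, embedded by
precomposition with the quotient map. For the finitely generated group `Q = G ⧸ (A + B)` both
conditions say that `Q` is finite: a finite `Q` has only characters into `e`-th roots of unity,
`e = |Q|`, and none into `ℚ`; an infinite `Q` surjects onto `ℤ`, so `Hom(Q, M)` contains a copy
of `M` for `M = kˣ` and `M = ℚ`.
-/

namespace AddMonoidHom

variable {G H K M : Type*} [AddGroup H] [AddGroup K] [AddGroup M]

theorem range_comp_of_surjective [AddGroup G] {ν : G →+ H} (hν : Function.Surjective ν) :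
    Set.range (fun f : H →+ M => f.comp ν) = {χ | ν.ker ≤ χ.ker} := by
  ext χ
  constructor
  · rintro ⟨f, rfl⟩ x hx
    simp [mem_ker.mp hx]
  · intro hχ
    exact ⟨ν.liftOfSurjective hν ⟨χ, hχ⟩, ν.liftOfRightInverse_comp _ _ ⟨χ, hχ⟩⟩

theorem range_comp_inter_range_comp [AddCommGroup G] {ν : G →+ H} {μ : G →+ K}
    (hν : Function.Surjective ν) (hμ : Function.Surjective μ) :
    Set.range (fun f : H →+ M => f.comp ν) ∩ Set.range (fun g : K →+ M => g.comp μ) =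
      Set.range (fun φ : G ⧸ (ν.ker ⊔ μ.ker) →+ M => φ.comp (QuotientAddGroup.mk' _)) := by
  rw [range_comp_of_surjective hν, range_comp_of_surjective hμ,
    range_comp_of_surjective (QuotientAddGroup.mk'_surjective _), QuotientAddGroup.ker_mk']
  ext χ
  simp only [Set.mem_inter_iff, Set.mem_ofPred_eq, sup_le_iff]

end AddMonoidHom

theorem Units.infinite_of_groupWithZero {G₀ : Type*} [GroupWithZero G₀] [Infinite G₀] :
    Infinite G₀ˣ :=
  have : Infinite {a : G₀ // a ≠ 0} := (Set.finite_singleton 0).infinite_compl.to_subtype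
  .of_injective _ unitsEquivNeZero.symm.injective

theorem AddMonoidHom.eq_zero_of_finite {Q M : Type*} [AddCommGroup Q] [Finite Q]
    [AddCommGroup M] [IsAddTorsionFree M] (φ : Q →+ M) : φ = 0 := by
  ext q
  apply nsmul_right_injective (Nat.card_pos (α := Q)).ne'
  simp only [← map_nsmul, card_nsmul_eq_zero', map_zero, AddMonoidHom.zero_apply, smul_zero]

theorem finite_addMonoidHom_units_of_finite {Q R : Type*} [AddCommGroup Q] [Finite Q]
    [CommRing R] [IsDomain R] : Finite (Q →+ Additive Rˣ) := by
  let toRoots (f : Q →+ Additive Rˣ) (q : Q) : rootsOfUnity (Nat.card Q) R :=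
    ⟨(f q).toMul, by rw [mem_rootsOfUnity, ← toMul_nsmul, ← map_nsmul, card_nsmul_eq_zero',
      map_zero, toMul_zero]⟩
  refine .of_injective toRoots fun f g hfg => ?_
  ext q
  exact congrArg (fun x : rootsOfUnity _ R => ((x : Rˣ) : R)) (congrFun hfg q)

theorem infinite_addMonoidHom_of_surjective_int {Q M : Type*} [AddCommGroup Q] [AddGroup M]
    [Infinite M] {π : Q →+ ℤ} (hπ : Function.Surjective π) : Infinite (Q →+ M) := by
  obtain ⟨q, hq⟩ := hπ 1
  refine .of_injective (fun m => (zmultiplesHom M m).comp π) fun m m' h => ?_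
  simpa [hq] using DFunLike.congr_fun h q

theorem AddGroup.exists_surjective_int_of_infinite {Q : Type*} [AddCommGroup Q] [AddGroup.FG Q]
    [Infinite Q] : ∃ π : Q →+ ℤ, Function.Surjective π := by
  obtain ⟨m, ι, _, p, hp, e, ⟨f⟩⟩ := AddCommGroup.equiv_free_prod_directSum_zmod Q
  cases m with
  | zero =>
    have : ∀ i, NeZero (p i ^ e i) := fun i => ⟨pow_ne_zero _ (hp i).ne_zero⟩
    have : Finite (DirectSum ι fun i => ZMod (p i ^ e i)) :=
      .of_equiv _ DFinsupp.equivFunOnFintype.symm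
    exact absurd (Finite.of_equiv _ f.symm.toEquiv) (not_finite_iff_infinite.mpr ‹_›)
  | succ m =>
    refine ⟨(Finsupp.applyAddHom 0).comp ((AddMonoidHom.fst _ _).comp f.toAddMonoidHom),
      fun a => ⟨f.symm (Finsupp.single 0 a, 0), ?_⟩⟩
    simp

theorem finite_addMonoidHom_units_iff {Q R : Type*} [AddCommGroup Q] [AddGroup.FG Q]
    [CommRing R] [IsDomain R] [Infinite Rˣ] : Finite (Q →+ Additive Rˣ) ↔ Finite Q := by
  refine ⟨fun _ => ?_, fun _ => finite_addMonoidHom_units_of_finite⟩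
  by_contra hQ
  have : Infinite Q := not_finite_iff_infinite.mp hQ
  obtain ⟨π, hπ⟩ := AddGroup.exists_surjective_int_of_infinite (Q := Q)
  exact not_finite_iff_infinite.mpr (infinite_addMonoidHom_of_surjective_int hπ) ‹_›

theorem subsingleton_addMonoidHom_rat_iff {Q : Type*} [AddCommGroup Q] [AddGroup.FG Q] :
    Subsingleton (Q →+ ℚ) ↔ Finite Q := by
  refine ⟨fun _ => ?_, fun _ => ⟨fun φ ψ => φ.eq_zero_of_finite.trans ψ.eq_zero_of_finite.symm⟩⟩
  by_contra hQ
  have : Infinite Q := not_finite_iff_infinite.mp hQ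
  obtain ⟨π, hπ⟩ := AddGroup.exists_surjective_int_of_infinite (Q := Q)
  have := infinite_addMonoidHom_of_surjective_int (M := ℚ) hπ
  exact not_finite (Q →+ ℚ)

/-- Let `ν : ℤⁿ → ℤʳ` and `μ : ℤⁿ → ℤˢ` be surjective homomorphisms and `k` an
infinite field. The intersection of the pullbacks `ν*(Hom(ℤʳ, kˣ))` and
`μ*(Hom(ℤˢ, kˣ))` inside `Hom(ℤⁿ, kˣ)` is finite iff the intersection of the
pullbacks `ν*(Hom(ℤʳ, ℚ))` and `μ*(Hom(ℤˢ, ℚ))` inside `Hom(ℤⁿ, ℚ)` is `{0}`. -/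
theorem pullback_char_tori_finite_iff {k : Type*} [Field k] [Infinite k]
    {n r s : ℕ} (ν : (Fin n → ℤ) →+ (Fin r → ℤ)) (μ : (Fin n → ℤ) →+ (Fin s → ℤ))
    (hν : Function.Surjective ν) (hμ : Function.Surjective μ) :
    (Set.range (fun f : (Fin r → ℤ) →+ Additive kˣ => f.comp ν) ∩
        Set.range (fun g : (Fin s → ℤ) →+ Additive kˣ => g.comp μ)).Finite ↔
      Set.range (fun f : (Fin r → ℤ) →+ ℚ => f.comp ν) ∩
        Set.range (fun g : (Fin s → ℤ) →+ ℚ => g.comp μ) = {0} := by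
  have : Infinite kˣ := Units.infinite_of_groupWithZero
  have hmk := QuotientAddGroup.mk'_surjective (ν.ker ⊔ μ.ker)
  rw [AddMonoidHom.range_comp_inter_range_comp hν hμ,
    AddMonoidHom.range_comp_inter_range_comp hν hμ,
    Set.finite_range_iff fun _ _ => (AddMonoidHom.cancel_right hmk).mp,
    finite_addMonoidHom_units_iff, Set.range_eq_singleton_iff,
    ← subsingleton_addMonoidHom_rat_iff, subsingleton_iff_forall_eq 0]
  exact forall_congr' fun φ => (AddMonoidHom.cancel_right (g₂ := 0) hmk).symm
end
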